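/- arXiv:2210.09681 — 9 statements merged into one kernel-verified Lean document; each statement's English description precedes it below -/
import Mathlib

section
/- Let N ≥ 2 be an integer, r ∈ (0, 1/(N-1)], p = 1 - (N-1)r, and let π_k = 1/N + ((N-1)/N)(p-r)^k. Define a_j = Σ_{k=0}^{j} (j-k)·(1-p)·(1-r)^{j-k-1}·π_k for j ≥ 0 (with the convention that the k = j term, having factor (j-k) = 0, vanishes). Then a_j = (N-1)/(Nr) + (p-r)^{j+1}/(Nr) - (1-r)^{j+1}/r. -/
/-!
Write `q = 1 - r`. Then `a_j = (1 - p) A_j`, where `A_j` is the `q`-derivative of the convolution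
`S_j = ∑_{k ≤ j} q^(j-k) π_k`, and both satisfy first-order recursions:
`S_{j+1} = q S_j + π_{j+1}` and `A_{j+1} = q A_j + S_j`. Since `p - r = 1 - N r` and
`1 - p = (N - 1) r`, induction gives `S_j = (1 - (p - r)^(j+1)) / (N r)`, and then the closed form
for `a_j`.
-/

open Finset

section GeomConv

variable {R : Type*} [CommRing R] (q : R) (x : ℕ → R)

def geomConv (j : ℕ) : R :=
  ∑ k ∈ range (j + 1), q ^ (j - k) * x k

def geomConvDeriv (j : ℕ) : R :=
  ∑ k ∈ range (j + 1), ((j : R) - k) * q ^ (j - k - 1) * x k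

theorem geomConv_zero : geomConv q x 0 = x 0 := by
  simp [geomConv]

theorem geomConv_succ (j : ℕ) : geomConv q x (j + 1) = q * geomConv q x j + x (j + 1) := by
  rw [geomConv, sum_range_succ, geomConv, mul_sum, Nat.sub_self, pow_zero, one_mul]
  congr 1
  refine sum_congr rfl fun k hk => ?_
  rw [Nat.sub_add_comm (mem_range_succ_iff.mp hk), pow_succ]
  ring

theorem geomConvDeriv_zero : geomConvDeriv q x 0 = 0 := by
  simp [geomConvDeriv]

theorem geomConvDeriv_succ (j : ℕ) :
    geomConvDeriv q x (j + 1) = q * geomConvDeriv q x j + geomConv q x j := by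
  rw [geomConvDeriv, sum_range_succ, geomConvDeriv, geomConv, mul_sum, ← sum_add_distrib]
  simp only [sub_self, zero_mul, add_zero]
  refine sum_congr rfl fun k hk => ?_
  obtain ⟨m, rfl⟩ := Nat.exists_eq_add_of_le (mem_range_succ_iff.mp hk)
  rw [show k + m + 1 - k - 1 = m by omega, show k + m - k - 1 = m - 1 by omega,
    Nat.add_sub_cancel_left]
  push_cast
  -- for `m = 0` the exponent `m - 1` truncates to `0`, but the term carries the factor `0`
  rcases m with _ | m
  · simp
  · rw [Nat.add_sub_cancel, pow_succ]
    push_cast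
    ring

end GeomConv

section MeanAge

variable {N r p : ℝ} (hN : N ≠ 0) (hr : r ≠ 0) (hp : p = 1 - (N - 1) * r) {π : ℕ → ℝ}
  (hπ : ∀ k, π k = 1 / N + (N - 1) / N * (p - r) ^ k)
include hN hr hp hπ

theorem geomConv_one_sub_eq (j : ℕ) :
    geomConv (1 - r) π j = (1 - (p - r) ^ (j + 1)) / (N * r) := by
  induction j with
  | zero =>
    rw [geomConv_zero, hπ, hp]
    field_simp
    ring
  | succ j ih =>
    rw [geomConv_succ, ih, hπ, hp]
    field_simp
    ring

theorem one_sub_mul_geomConvDeriv_eq (j : ℕ) :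
    (1 - p) * geomConvDeriv (1 - r) π j =
      (N - 1) / (N * r) + (p - r) ^ (j + 1) / (N * r) - (1 - r) ^ (j + 1) / r := by
  induction j with
  | zero =>
    rw [geomConvDeriv_zero, hp]
    field_simp
    ring
  | succ j ih =>
    rw [geomConvDeriv_succ, mul_add, ← mul_assoc, mul_comm _ (1 - r), mul_assoc, ih,
      geomConv_one_sub_eq hN hr hp hπ, hp]
    field_simp
    ring

end MeanAge

theorem stmt_1_general (N : ℕ) (hN : 2 ≤ N) (r p : ℝ)
    (hr : 0 < r)
    (hp : p = 1 - ((N : ℝ) - 1) * r)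
    (π : ℕ → ℝ)
    (hπ : ∀ k, π k = 1 / (N : ℝ) + (((N : ℝ) - 1) / (N : ℝ)) * (p - r) ^ k)
    (a : ℕ → ℝ)
    (ha : ∀ j, a j =
      ∑ k ∈ Finset.range (j + 1), ((j : ℝ) - (k : ℝ)) * (1 - p) * (1 - r) ^ (j - k - 1) * π k) :
    ∀ j, a j = ((N : ℝ) - 1) / ((N : ℝ) * r) + (p - r) ^ (j + 1) / ((N : ℝ) * r)
      - (1 - r) ^ (j + 1) / r := by
  intro j
  have hN0 : (N : ℝ) ≠ 0 := by exact_mod_cast (by omega : N ≠ 0)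
  rw [ha, ← one_sub_mul_geomConvDeriv_eq hN0 hr.ne' hp hπ, geomConvDeriv, mul_sum]
  exact sum_congr rfl fun k _ => by ring

theorem stmt_1 (N : ℕ) (hN : 2 ≤ N) (r p : ℝ)
    (hr : 0 < r) (hr' : r ≤ 1 / ((N : ℝ) - 1))
    (hp : p = 1 - ((N : ℝ) - 1) * r)
    (π : ℕ → ℝ)
    (hπ : ∀ k, π k = 1 / (N : ℝ) + (((N : ℝ) - 1) / (N : ℝ)) * (p - r) ^ k)
    (a : ℕ → ℝ)
    (ha : ∀ j, a j =
      ∑ k ∈ Finset.range (j + 1), ((j : ℝ) - (k : ℝ)) * (1 - p) * (1 - r) ^ (j - k - 1) * π k) :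
    ∀ j, a j = ((N : ℝ) - 1) / ((N : ℝ) * r) + (p - r) ^ (j + 1) / ((N : ℝ) * r)
      - (1 - r) ^ (j + 1) / r :=
  stmt_1_general N hN r p hr hp π hπ a ha
end

section
/- Let N ≥ 2, r ∈ (0,1), p = 1 - (N-1)r, and suppose |p - r| ≤ 1 - r. Then the sequence a_j = (N-1)/(Nr) + (p-r)^{j+1}/(Nr) - (1-r)^{j+1}/r is monotonically increasing in j. -/
theorem stmt_3 (N : ℕ) (hN : 2 ≤ N) (r p : ℝ)
    (hr : 0 < r) (hr1 : r < 1)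
    (hp : p = 1 - ((N : ℝ) - 1) * r)
    (hpr : |p - r| ≤ 1 - r)
    (a : ℕ → ℝ)
    (ha : ∀ j, a j = ((N : ℝ) - 1) / ((N : ℝ) * r) + (p - r) ^ (j + 1) / ((N : ℝ) * r)
      - (1 - r) ^ (j + 1) / r) :
    Monotone a := by
  apply monotone_nat_of_le_succ
  intro j
  have hNpos : (0:ℝ) < N := by positivity
  have hd : a (j+1) - a j = (1-r)^(j+1) - (p-r)^(j+1) := by
    rw [ha, ha]
    have hpr' : p - r = 1 - (N:ℝ)*r := by rw [hp]; ring
    rw [hpr']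
    have h1 : (1 - (N:ℝ)*r) ^ (j+1+1) = (1 - (N:ℝ)*r)^(j+1) * (1 - (N:ℝ)*r) := pow_succ _ _
    have h2 : (1 - r) ^ (j+1+1) = (1 - r)^(j+1) * (1 - r) := pow_succ _ _
    rw [h1, h2]
    field_simp
    ring
  have hle : (p-r)^(j+1) ≤ (1-r)^(j+1) := by
    calc (p-r)^(j+1) ≤ |(p-r)^(j+1)| := le_abs_self _
      _ = |p-r|^(j+1) := abs_pow _ _
      _ ≤ (1-r)^(j+1) := pow_le_pow_left₀ (abs_nonneg _) hpr _
  linarith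
end

section
/- Let N = 2, r ∈ [4/5, 1), p = 1 - r, and a_j = 1/(2r) + (p-r)^{j+1}/(2r) - (1-r)^{j+1}/r. Then the subsequence (a_{2k})_{k≥0} is increasing in k and the subsequence (a_{2k+1})_{k≥0} is decreasing in k. -/
lemma aux_mono_step (r x y : ℝ) (hr0 : 0 < r) (hx1 : -1 < x) (hx2 : x ≤ -(3/5))
    (hy0 : 0 < y) (hy5 : y ≤ 1/5) (k : ℕ) :
    1/(2*r) + x^(2*k+1)/(2*r) - y^(2*k+1)/r
      ≤ 1/(2*r) + x^(2*k+3)/(2*r) - y^(2*k+3)/r := by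
  have hdiff : (1/(2*r) + x^(2*k+3)/(2*r) - y^(2*k+3)/r)
      - (1/(2*r) + x^(2*k+1)/(2*r) - y^(2*k+1)/r)
      = (x^2)^k * (x^3 - x) / (2*r) + (y^2)^k * (y - y^3) / r := by ring
  have t1 : 0 ≤ (x^2)^k * (x^3 - x) := by
    refine mul_nonneg (pow_nonneg (sq_nonneg _) k) ?_
    nlinarith [mul_pos (mul_pos_of_neg_of_neg (show x < 0 by linarith)
      (show x - 1 < 0 by linarith)) (show 0 < x + 1 by linarith)]
  have t2 : 0 ≤ (y^2)^k * (y - y^3) := by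
    refine mul_nonneg (pow_nonneg (sq_nonneg _) k) ?_
    nlinarith [mul_pos (mul_pos hy0 (show 0 < 1 - y by linarith)) (show 0 < 1 + y by linarith)]
  have d1 : 0 ≤ (x^2)^k * (x^3 - x) / (2*r) := div_nonneg t1 (by linarith)
  have d2 : 0 ≤ (y^2)^k * (y - y^3) / r := div_nonneg t2 hr0.le
  linarith

lemma aux_anti_step (r x y : ℝ) (hr : 4/5 ≤ r) (hr1 : r < 1)
    (hx : x = 1 - r - r) (hy : y = 1 - r) (k : ℕ) :
    1/(2*r) + x^(2*k+4)/(2*r) - y^(2*k+4)/r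
      ≤ 1/(2*r) + x^(2*k+2)/(2*r) - y^(2*k+2)/r := by
  have hr0 : (0:ℝ) < r := by linarith
  have hdiff : (1/(2*r) + x^(2*k+2)/(2*r) - y^(2*k+2)/r)
      - (1/(2*r) + x^(2*k+4)/(2*r) - y^(2*k+4)/r)
      = ((x^2)^k * (x^2 * (1 - x^2)) - (y^2)^k * (2 * y^2 * (1 - y^2))) / (2*r) := by ring
  have hy2x2 : y^2 ≤ x^2 := by subst hx hy; nlinarith
  have hpow : (y^2)^k ≤ (x^2)^k := pow_le_pow_left₀ (sq_nonneg _) hy2x2 k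
  have hB0 : 0 ≤ 2 * y^2 * (1 - y^2) := by
    subst hy
    nlinarith [mul_nonneg (sq_nonneg (1 - r)) (mul_nonneg hr0.le (show (0:ℝ) ≤ 2 - r by linarith))]
  have hfact : x^2 * (1 - x^2) - 2 * y^2 * (1 - y^2) = 2*r^2*(1-r)*(7*r-5) := by
    subst hx hy; ring
  have hAB : 2 * y^2 * (1 - y^2) ≤ x^2 * (1 - x^2) := by
    nlinarith [mul_nonneg (mul_nonneg (mul_nonneg (by norm_num : (0:ℝ) ≤ 2) (sq_nonneg r))
      (show (0:ℝ) ≤ 1 - r by linarith)) (show (0:ℝ) ≤ 7*r - 5 by linarith)]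
  have hchain : (y^2)^k * (2 * y^2 * (1 - y^2)) ≤ (x^2)^k * (x^2 * (1 - x^2)) :=
    le_trans (mul_le_mul_of_nonneg_right hpow hB0)
      (mul_le_mul_of_nonneg_left hAB (pow_nonneg (sq_nonneg _) k))
  have hnum : 0 ≤ ((x^2)^k * (x^2 * (1 - x^2)) - (y^2)^k * (2 * y^2 * (1 - y^2))) / (2*r) :=
    div_nonneg (by linarith) (by linarith)
  linarith

theorem stmt_7 (r p : ℝ) (hr : 4 / 5 ≤ r) (hr1 : r < 1) (hp : p = 1 - r)
    (a : ℕ → ℝ)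
    (ha : ∀ j, a j = 1 / (2 * r) + (p - r) ^ (j + 1) / (2 * r) - (1 - r) ^ (j + 1) / r) :
    Monotone (fun k => a (2 * k)) ∧ Antitone (fun k => a (2 * k + 1)) := by
  subst hp
  have hr0 : (0:ℝ) < r := by linarith
  constructor
  · apply monotone_nat_of_le_succ
    intro k
    simp only [ha]
    have e1 : 2 * (k + 1) + 1 = 2 * k + 3 := by ring
    have e2 : 2 * k + 1 = 2 * k + 1 := rfl
    rw [e1]
    exact aux_mono_step r (1 - r - r) (1 - r) hr0 (by linarith) (by linarith)
      (by linarith) (by linarith) k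
  · apply antitone_nat_of_succ_le
    intro k
    simp only [ha]
    have e1 : 2 * (k + 1) + 1 + 1 = 2 * k + 4 := by ring
    have e2 : 2 * k + 1 + 1 = 2 * k + 2 := by ring
    rw [e1, e2]
    exact aux_anti_step r (1 - r - r) (1 - r) hr hr1 rfl rfl k
end

section
/- Let N = 2, r ∈ [4/5, 1), p = 1 - r, and a_j = 1/(2r) + (p-r)^{j+1}/(2r) - (1-r)^{j+1}/r. Then for all k, k' ≥ 0, a_{2k} ≤ 1/(2r) ≤ a_{2k'+1}; in particular every even-indexed term is at most every odd-indexed term. -/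
theorem stmt_8 (r p : ℝ) (hr : 4 / 5 ≤ r) (hr1 : r < 1) (hp : p = 1 - r)
    (a : ℕ → ℝ)
    (ha : ∀ j, a j = 1 / (2 * r) + (p - r) ^ (j + 1) / (2 * r) - (1 - r) ^ (j + 1) / r) :
    ∀ k k' : ℕ, a (2 * k) ≤ 1 / (2 * r) ∧ 1 / (2 * r) ≤ a (2 * k' + 1) ∧
      a (2 * k) ≤ a (2 * k' + 1) := by
  intro k k'
  have hr0 : (0:ℝ) < r := by linarith
  have h1 : (0:ℝ) ≤ 1 - r := by linarith
  have h2 : (0:ℝ) ≤ 2 * r - 1 := by linarith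
  have hpr : p - r = -(2 * r - 1) := by rw [hp]; ring
  have heven : a (2 * k) ≤ 1 / (2 * r) := by
    rw [ha, hpr]
    rw [Odd.neg_pow ⟨k, by ring⟩, neg_div]
    have t1 : 0 ≤ (2 * r - 1) ^ (2 * k + 1) / (2 * r) :=
      div_nonneg (pow_nonneg h2 _) (by linarith)
    have t2 : 0 ≤ (1 - r) ^ (2 * k + 1) / r :=
      div_nonneg (pow_nonneg h1 _) (by linarith)
    linarith
  have hodd : 1 / (2 * r) ≤ a (2 * k' + 1) := by
    rw [ha, hpr]
    rw [Even.neg_pow ⟨k' + 1, by ring⟩]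
    have key : 2 * (1 - r) ^ (2 * k' + 1 + 1) ≤ (2 * r - 1) ^ (2 * k' + 1 + 1) := by
      have h3 : 3 * (1 - r) ≤ 2 * r - 1 := by linarith
      have h4 : (2:ℝ) ≤ 3 ^ (2 * k' + 1 + 1) := by
        calc (2:ℝ) ≤ 3 ^ 1 := by norm_num
          _ ≤ 3 ^ (2 * k' + 1 + 1) := by
            apply pow_le_pow_right₀ (by norm_num); omega
      calc 2 * (1 - r) ^ (2 * k' + 1 + 1)
          ≤ 3 ^ (2 * k' + 1 + 1) * (1 - r) ^ (2 * k' + 1 + 1) := by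
            have := pow_nonneg h1 (2 * k' + 1 + 1)
            nlinarith
        _ = (3 * (1 - r)) ^ (2 * k' + 1 + 1) := by rw [mul_pow]
        _ ≤ (2 * r - 1) ^ (2 * k' + 1 + 1) := pow_le_pow_left₀ (by linarith) h3 _
    have hdiv : 2 * (1 - r) ^ (2 * k' + 1 + 1) / (2 * r)
        ≤ (2 * r - 1) ^ (2 * k' + 1 + 1) / (2 * r) :=
      div_le_div_of_nonneg_right key (by linarith)
    have heq : (1 - r) ^ (2 * k' + 1 + 1) / r
        = 2 * (1 - r) ^ (2 * k' + 1 + 1) / (2 * r) := by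
      field_simp
    rw [heq] at *
    linarith
  exact ⟨heven, hodd, le_trans heven hodd⟩
end

section
/- Let N = 2, r ∈ [4/5, 1), p = 1-r, and a_j = 1/(2r) + (p-r)^{j+1}/(2r) - (1-r)^{j+1}/r. Then the sequence |a_{i+2} - a_i| is decreasing in i; explicitly, for i even, |a_{i+3} - a_{i+1}| - |a_{i+2} - a_i| = -[(2-r)²(1-r)^{i+1} - (p-r)^{i+1}(1+p-r)²] ≤ 0, and for i odd the same difference equals (2-r)²(1-r)^{i+1} - (p-r)^{i+1}(1+p-r)² ≤ 0. -/
theorem stmt_9 (r p : ℝ) (hr : 4 / 5 ≤ r) (hr1 : r < 1) (hp : p = 1 - r)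
    (a : ℕ → ℝ)
    (ha : ∀ j, a j = 1 / (2 * r) + (p - r) ^ (j + 1) / (2 * r) - (1 - r) ^ (j + 1) / r) :
    Antitone (fun i => |a (i + 2) - a i|) ∧
    (∀ i : ℕ, Even i →
      |a (i + 3) - a (i + 1)| - |a (i + 2) - a i|
        = -((2 - r) ^ 2 * (1 - r) ^ (i + 1) - (p - r) ^ (i + 1) * (1 + p - r) ^ 2) ∧
      |a (i + 3) - a (i + 1)| - |a (i + 2) - a i| ≤ 0) ∧
    (∀ i : ℕ, Odd i →
      |a (i + 3) - a (i + 1)| - |a (i + 2) - a i|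
        = (2 - r) ^ 2 * (1 - r) ^ (i + 1) - (p - r) ^ (i + 1) * (1 + p - r) ^ 2 ∧
      |a (i + 3) - a (i + 1)| - |a (i + 2) - a i| ≤ 0) := by
  subst hp
  have h0 : (0:ℝ) < r := by linarith
  have hs : (0:ℝ) < 1 - r := by linarith
  have hst : 1 - r ≤ 2*r - 1 := by linarith
  have ht : (0:ℝ) ≤ 2*r - 1 := by linarith
  have h2r : 2 - r ≤ 2*(2*r - 1) := by linarith
  have hpow : ∀ n : ℕ, (1-r)^n ≤ (2*r-1)^n := fun n => pow_le_pow_left₀ hs.le hst n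
  have key : ∀ i : ℕ, a (i+2) - a i
      = (2-r)*(1-r)^(i+1) - 2*(1-r)*(1-2*r)^(i+1) := by
    intro i
    rw [ha, ha]
    have h1 : (1 - r - r) = (1 - 2*r) := by ring
    rw [h1]
    field_simp
    ring
  have negpow : ∀ n : ℕ, Odd n → (1-2*r)^n = -((2*r-1)^n) := by
    intro n hn
    have : (1-2*r) = -(2*r-1) := by ring
    rw [this, hn.neg_pow]
  have evenpow : ∀ n : ℕ, Even n → (1-2*r)^n = (2*r-1)^n := by
    intro n hn
    have : (1-2*r) = -(2*r-1) := by ring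
    rw [this, hn.neg_pow]
  -- sign of a (i+2) - a i
  have habs_even : ∀ i : ℕ, Even i → |a (i+2) - a i| = a (i+2) - a i := by
    intro i hi
    apply abs_of_nonneg
    rw [key i, negpow (i+1) (hi.add_one)]
    have p1 := pow_nonneg hs.le (i+1)
    have p2 := pow_nonneg ht (i+1)
    nlinarith
  have habs_odd : ∀ i : ℕ, Odd i → |a (i+2) - a i| = -(a (i+2) - a i) := by
    intro i hi
    apply abs_of_nonpos
    rw [key i, evenpow (i+1) (hi.add_one)]
    -- need (2-r)*(1-r)^(i+1) ≤ 2*(1-r)*(2r-1)^(i+1)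
    have hp1 := hpow i
    have p1 := pow_nonneg hs.le i
    have p2 := pow_nonneg ht i
    have e1 : (1-r)^(i+1) = (1-r)*(1-r)^i := by ring
    have e2 : (2*r-1)^(i+1) = (2*r-1)*(2*r-1)^i := by ring
    rw [e1, e2]
    nlinarith [mul_le_mul (show (2-r)*(1-r) ≤ 2*(1-r)*(2*r-1) by nlinarith) hp1 p1 (by nlinarith)]
  -- the even-case equality and inequality
  have heven : ∀ i : ℕ, Even i →
      |a (i + 3) - a (i + 1)| - |a (i + 2) - a i|
        = -((2 - r) ^ 2 * (1 - r) ^ (i + 1) - (1 - r - r) ^ (i + 1) * (1 + (1-r) - r) ^ 2) ∧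
      |a (i + 3) - a (i + 1)| - |a (i + 2) - a i| ≤ 0 := by
    intro i hi
    have e3 : a (i+3) - a (i+1) = a ((i+1)+2) - a (i+1) := by norm_num
    have heq : |a (i + 3) - a (i + 1)| - |a (i + 2) - a i|
        = -((2 - r) ^ 2 * (1 - r) ^ (i + 1) - (1 - r - r) ^ (i + 1) * (1 + (1-r) - r) ^ 2) := by
      rw [e3, habs_odd (i+1) (hi.add_one), habs_even i hi, key, key]
      have h1 : (1 - r - r) = (1 - 2*r) := by ring
      rw [h1]
      ring
    refine ⟨heq, ?_⟩
    rw [heq]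
    have h1 : (1 - r - r) = (1 - 2*r) := by ring
    rw [h1, negpow (i+1) (hi.add_one)]
    have p1 := pow_nonneg hs.le (i+1)
    have p2 := pow_nonneg ht (i+1)
    nlinarith
  have hodd : ∀ i : ℕ, Odd i →
      |a (i + 3) - a (i + 1)| - |a (i + 2) - a i|
        = (2 - r) ^ 2 * (1 - r) ^ (i + 1) - (1 - r - r) ^ (i + 1) * (1 + (1-r) - r) ^ 2 ∧
      |a (i + 3) - a (i + 1)| - |a (i + 2) - a i| ≤ 0 := by
    intro i hi
    have e3 : a (i+3) - a (i+1) = a ((i+1)+2) - a (i+1) := by norm_num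
    have heq : |a (i + 3) - a (i + 1)| - |a (i + 2) - a i|
        = (2 - r) ^ 2 * (1 - r) ^ (i + 1) - (1 - r - r) ^ (i + 1) * (1 + (1-r) - r) ^ 2 := by
      rw [e3, habs_even (i+1) hi.add_one, habs_odd i hi, key, key]
      have h1 : (1 - r - r) = (1 - 2*r) := by ring
      rw [h1]
      ring
    refine ⟨heq, ?_⟩
    rw [heq]
    have h1 : (1 - r - r) = (1 - 2*r) := by ring
    rw [h1, evenpow (i+1) hi.add_one]
    -- need (2-r)^2 (1-r)^(i+1) ≤ (2r-1)^(i+1) * (2-2r)^2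
    obtain ⟨k, hk⟩ := hi
    subst hk
    have e1 : (1-r)^(2*k+1+1) = (1-r)^2 * (1-r)^(2*k) := by ring
    have e2 : (2*r-1)^(2*k+1+1) = (2*r-1)^2 * (2*r-1)^(2*k) := by ring
    rw [e1, e2]
    have hp1 := hpow (2*k)
    have p1 := pow_nonneg hs.le (2*k)
    have p2 := pow_nonneg ht (2*k)
    nlinarith [mul_le_mul hp1 (sq_le_sq' (by nlinarith) h2r) (by positivity) p2, sq_nonneg (1-r), sq_nonneg (2*r-1)]
  refine ⟨?_, heven, hodd⟩
  apply antitone_nat_of_succ_le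
  intro n
  show |a (n+1+2) - a (n+1)| ≤ |a (n+2) - a n|
  rcases Nat.even_or_odd n with hn | hn
  · have := (heven n hn).2
    have e3 : n + 1 + 2 = n + 3 := by ring
    rw [e3]; linarith
  · have := (hodd n hn).2
    have e3 : n + 1 + 2 = n + 3 := by ring
    rw [e3]; linarith
end

section
/- Let N ≥ 2, r ∈ (0,1) with |p-r| < 1 and p = 1-(N-1)r, and let a_j = (N-1)/(Nr) + (p-r)^{j+1}/(Nr) - (1-r)^{j+1}/r. Then a_j converges to (N-1)/(Nr) as j → ∞, and for all i, j ≥ 0, Σ_{k=0}^{∞} |a_{i+k} - a_k| ≤ (1-r)/r² + |p-r|/(1-|p-r|)². -/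
/-! With `x = p - r` one has `N r = 1 - x`, so `a j = (N - 1)/(N r) + g x j - g (1 - r) j` where
`g t j = t^(j+1)/(1 - t)` is the tail `∑_{m > j} t^m` of the geometric series. For `|t| < 1`,
`g t (i + k) - g t k = -t^(k+1) ∑_{m < i} t^m` has absolute value at most `|t|^(k+1)/(1 - |t|)`,
uniformly in `i`, and these bounds sum to `|t|/(1 - |t|)^2`; for `t = 1 - r` this is `(1 - r)/r^2`. -/

open Filter Topology Finset

lemma tendsto_pow_succ_div_one_sub {t : ℝ} (ht : |t| < 1) :
    Tendsto (fun j : ℕ => t ^ (j + 1) / (1 - t)) atTop (𝓝 0) := by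
  simpa using ((tendsto_pow_atTop_nhds_zero_of_abs_lt_one ht).comp
    (tendsto_add_atTop_nat 1)).div_const (1 - t)

lemma abs_pow_add_succ_div_sub_le {t : ℝ} (ht : |t| < 1) (i k : ℕ) :
    |t ^ (i + k + 1) / (1 - t) - t ^ (k + 1) / (1 - t)| ≤ |t| ^ (k + 1) / (1 - |t|) := by
  have h1t : 1 - t ≠ 0 := by linarith [le_abs_self t]
  have hdiff : t ^ (i + k + 1) / (1 - t) - t ^ (k + 1) / (1 - t)
      = -(t ^ (k + 1) * ∑ m ∈ range i, t ^ m) := by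
    rw [div_sub_div_same, div_eq_iff h1t]
    linear_combination (-t ^ (k + 1)) * geom_sum_mul t i
  have hsum : ∑ m ∈ range i, |t| ^ m ≤ 1 / (1 - |t|) := by
    have h := geom_sum_Ico_le_of_lt_one (m := 0) (n := i) (abs_nonneg t) ht
    rwa [← range_eq_Ico, pow_zero] at h
  calc |t ^ (i + k + 1) / (1 - t) - t ^ (k + 1) / (1 - t)|
      = |t| ^ (k + 1) * |∑ m ∈ range i, t ^ m| := by rw [hdiff, abs_neg, abs_mul, abs_pow]
    _ ≤ |t| ^ (k + 1) * ∑ m ∈ range i, |t| ^ m := by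
        gcongr
        simpa only [abs_pow] using abs_sum_le_sum_abs (fun m => t ^ m) (range i)
    _ ≤ |t| ^ (k + 1) * (1 / (1 - |t|)) := by gcongr
    _ = |t| ^ (k + 1) / (1 - |t|) := mul_one_div _ _

lemma hasSum_pow_succ_div_one_sub {s : ℝ} (hs₀ : 0 ≤ s) (hs₁ : s < 1) :
    HasSum (fun k : ℕ => s ^ (k + 1) / (1 - s)) (s / (1 - s) ^ 2) := by
  have hterm : (fun k : ℕ => s ^ (k + 1) / (1 - s)) = fun k => s / (1 - s) * s ^ k := by
    ext k; ring
  rw [hterm, show s / (1 - s) ^ 2 = s / (1 - s) * (1 - s)⁻¹ by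
    rw [sq, ← div_div, div_eq_mul_inv (s / (1 - s))]]
  exact (hasSum_geometric_of_lt_one hs₀ hs₁).mul_left _

theorem stmt_10_general (N : ℕ) (r p : ℝ)
    (hr : 0 < r) (hr1 : r < 1)
    (hp : p = 1 - ((N : ℝ) - 1) * r)
    (hpr : |p - r| < 1)
    (a : ℕ → ℝ)
    (ha : ∀ j, a j = ((N : ℝ) - 1) / ((N : ℝ) * r) + (p - r) ^ (j + 1) / ((N : ℝ) * r)
      - (1 - r) ^ (j + 1) / r) :
    Filter.Tendsto a Filter.atTop (nhds (((N : ℝ) - 1) / ((N : ℝ) * r))) ∧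
    ∀ i : ℕ, ∑' k : ℕ, |a (i + k) - a k| ≤ (1 - r) / r ^ 2 + |p - r| / (1 - |p - r|) ^ 2 := by
  set x := p - r
  set c := ((N : ℝ) - 1) / ((N : ℝ) * r)
  have hNr : (N : ℝ) * r = 1 - x := by simp only [x, hp]; ring
  have ha' : a = fun j => c + x ^ (j + 1) / (1 - x) - (1 - r) ^ (j + 1) / (1 - (1 - r)) := by
    ext j; rw [ha, hNr, sub_sub_cancel]
  have hy_abs : |1 - r| = 1 - r := abs_of_pos (by linarith)
  have hy : |1 - r| < 1 := by rw [hy_abs]; linarith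
  refine ⟨?_, fun i => ?_⟩
  · rw [ha']
    simpa using (tendsto_const_nhds.add (tendsto_pow_succ_div_one_sub hpr)).sub
      (tendsto_pow_succ_div_one_sub hy)
  · have hbound : ∀ k, |a (i + k) - a k|
        ≤ |1 - r| ^ (k + 1) / (1 - |1 - r|) + |x| ^ (k + 1) / (1 - |x|) := fun k => by
      rw [ha']
      calc _ = |(x ^ (i + k + 1) / (1 - x) - x ^ (k + 1) / (1 - x))
            - ((1 - r) ^ (i + k + 1) / (1 - (1 - r)) - (1 - r) ^ (k + 1) / (1 - (1 - r)))| := by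
              congr 1; ring
        _ ≤ _ := (abs_sub _ _).trans (by linarith [abs_pow_add_succ_div_sub_le hpr i k,
              abs_pow_add_succ_div_sub_le hy i k])
    have hsum := (hasSum_pow_succ_div_one_sub (abs_nonneg _) hy).add
      (hasSum_pow_succ_div_one_sub (abs_nonneg x) hpr)
    calc _ ≤ |1 - r| / (1 - |1 - r|) ^ 2 + |x| / (1 - |x|) ^ 2 := hasSum_le hbound
          (hsum.summable.of_nonneg_of_le (fun _ => abs_nonneg _) hbound).hasSum hsum
      _ = _ := by rw [hy_abs, sub_sub_cancel]

theorem stmt_10 (N : ℕ) (hN : 2 ≤ N) (r p : ℝ)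
    (hr : 0 < r) (hr1 : r < 1)
    (hp : p = 1 - ((N : ℝ) - 1) * r)
    (hpr : |p - r| < 1)
    (a : ℕ → ℝ)
    (ha : ∀ j, a j = ((N : ℝ) - 1) / ((N : ℝ) * r) + (p - r) ^ (j + 1) / ((N : ℝ) * r)
      - (1 - r) ^ (j + 1) / r) :
    Filter.Tendsto a Filter.atTop (nhds (((N : ℝ) - 1) / ((N : ℝ) * r))) ∧
    ∀ i : ℕ, ∑' k : ℕ, |a (i + k) - a k| ≤ (1 - r) / r ^ 2 + |p - r| / (1 - |p - r|) ^ 2 :=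
  stmt_10_general N r p hr hr1 hp hpr a ha
end

section
/- Let ρ ∈ (0,1] and n ≥ 0 an integer. Define u(i) = ρ/(nρ+1) for 0 ≤ i ≤ n and u(i) = (1-ρ)^{i-n}·ρ/(nρ+1) for i ≥ n+1. Then Σ_{i=0}^{∞} u(i) = 1, and u is a stationary distribution of the Markov chain on ℕ in which from state i < n the chain moves to i+1 with probability 1, and from state i ≥ n the chain moves to state 0 with probability ρ and to state i+1 with probability 1-ρ. -/
/-! Since `i - n` truncates at `0`, the claimed distribution is `u i = (1 - ρ) ^ (i - n) * c` with
`c = ρ / (n ρ + 1)`, a constant plateau followed by a geometric tail. Its mass is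
`(n + 1 / ρ) * c = 1`. Every state `k + 1` is entered only from `k`, so balance there is the
recursion `u (k + 1) = P k (k + 1) * u k`, while state `0` is entered with probability `ρ` from
each `i ≥ n`, and `ρ` times the tail mass `c / ρ` is `c = u 0`. -/

open Finset

section GeometricTail

variable {r : ℝ}

theorem pow_succ_tsub (k n : ℕ) :
    r ^ (k + 1 - n) = (if k < n then 1 else r) * r ^ (k - n) := by
  split_ifs with h
  · rw [Nat.sub_eq_zero_of_le h, Nat.sub_eq_zero_of_le h.le, pow_zero, one_mul]
  · rw [Nat.sub_add_comm (not_lt.1 h), pow_succ, mul_comm]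

theorem hasSum_pow_tsub (hr : |r| < 1) (n : ℕ) :
    HasSum (fun i ↦ r ^ (i - n)) (n + (1 - r)⁻¹) := by
  have hhead : ∑ i ∈ range n, r ^ (i - n) = n := by
    rw [sum_congr rfl fun i hi ↦ by rw [Nat.sub_eq_zero_of_le (mem_range.1 hi).le, pow_zero]]
    simp
  rw [← hasSum_nat_add_iff' n, hhead, add_sub_cancel_left]
  simpa using hasSum_geometric_of_abs_lt_one hr

theorem hasSum_ite_le_pow_tsub (hr : |r| < 1) (n : ℕ) :
    HasSum (fun i ↦ if n ≤ i then r ^ (i - n) else 0) (1 - r)⁻¹ := by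
  have hhead : ∑ i ∈ range n, (if n ≤ i then r ^ (i - n) else 0) = 0 :=
    sum_eq_zero fun i hi ↦ if_neg (not_le.2 (mem_range.1 hi))
  rw [← hasSum_nat_add_iff' n, hhead, sub_zero]
  simpa using hasSum_geometric_of_abs_lt_one hr

end GeometricTail

def thresholdKernel (ρ : ℝ) (n i j : ℕ) : ℝ :=
  if i < n then (if j = i + 1 then 1 else 0)
  else (if j = 0 then ρ else if j = i + 1 then 1 - ρ else 0)

namespace thresholdKernel

variable {ρ : ℝ} {n : ℕ}

theorem tsum_mul_zero (f : ℕ → ℝ) :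
    ∑' i, thresholdKernel ρ n i 0 * f i = ρ * ∑' i, if n ≤ i then f i else 0 := by
  rw [← tsum_mul_left]
  refine tsum_congr fun i ↦ ?_
  rcases lt_or_ge i n with h | h <;> simp [thresholdKernel, h, not_le.2, not_lt.2]

theorem tsum_mul_succ (f : ℕ → ℝ) (k : ℕ) :
    ∑' i, thresholdKernel ρ n i (k + 1) * f i = (if k < n then 1 else 1 - ρ) * f k := by
  rw [tsum_eq_single k fun i hi ↦ by unfold thresholdKernel; split_ifs <;> simp_all]
  unfold thresholdKernel
  split_ifs <;> simp_all

end thresholdKernel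

theorem stmt_11 (ρ : ℝ) (hρ : 0 < ρ) (hρ1 : ρ ≤ 1) (n : ℕ)
    (u : ℕ → ℝ)
    (hu : ∀ i, u i = if i ≤ n then ρ / ((n : ℝ) * ρ + 1)
      else (1 - ρ) ^ (i - n) * ρ / ((n : ℝ) * ρ + 1))
    (P : ℕ → ℕ → ℝ)
    (hP : ∀ i j, P i j = if i < n then (if j = i + 1 then 1 else 0)
      else (if j = 0 then ρ else if j = i + 1 then 1 - ρ else 0)) :
    (∑' i : ℕ, u i) = 1 ∧ ∀ j : ℕ, u j = ∑' i : ℕ, P i j * u i := by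
  set c := ρ / ((n : ℝ) * ρ + 1)
  have hr : |1 - ρ| < 1 := abs_lt.2 ⟨by linarith, by linarith⟩
  have hu_pow : u = fun i ↦ (1 - ρ) ^ (i - n) * c := by
    ext i
    rw [hu, mul_div_assoc]
    split_ifs with h
    · rw [Nat.sub_eq_zero_of_le h, pow_zero, one_mul]
    · rfl
  obtain rfl : P = thresholdKernel ρ n := funext₂ hP
  refine ⟨?_, fun j ↦ ?_⟩
  · rw [hu_pow, ((hasSum_pow_tsub hr n).mul_right c).tsum_eq, sub_sub_cancel]
    field_simp
    exact mul_div_cancel₀ ρ (by positivity)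
  cases j with
  | zero =>
    simp only [hu_pow, thresholdKernel.tsum_mul_zero, ← ite_zero_mul, zero_tsub, pow_zero, one_mul]
    rw [((hasSum_ite_le_pow_tsub hr n).mul_right c).tsum_eq, sub_sub_cancel,
      mul_inv_cancel_left₀ hρ.ne']
  | succ k =>
    simp only [thresholdKernel.tsum_mul_succ, hu_pow, pow_succ_tsub]
    split_ifs <;> ring
end

section
/- Let (A_k) and (D_k) be real sequences with D strictly decreasing, set λ(k) = (A_{k+1}-A_k)/(D_k - D_{k+1}), and suppose λ(k) is strictly increasing in k. If λ satisfies λ(n) < λ ≤ λ(n+1) for some n ≥ 0, then for all k ≥ 0, A_{n+1} + λD_{n+1} ≤ A_k + λD_k; i.e., the index n+1 minimizes k ↦ A_k + λD_k. Similarly, if λ ≤ λ(0) then the index 0 is a minimizer. -/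
theorem stmt_14 (A D lam : ℕ → ℝ) (hD : StrictAnti D)
    (hlam : ∀ k, lam k = (A (k + 1) - A k) / (D k - D (k + 1)))
    (hmono : StrictMono lam) (L : ℝ) :
    (∀ n : ℕ, lam n < L → L ≤ lam (n + 1) →
      ∀ k : ℕ, A (n + 1) + L * D (n + 1) ≤ A k + L * D k) ∧
    (L ≤ lam 0 → ∀ k : ℕ, A 0 + L * D 0 ≤ A k + L * D k) := by
  have hd : ∀ k : ℕ, 0 < D k - D (k + 1) := fun k => sub_pos.mpr (hD (Nat.lt_succ_self k))
  have step : ∀ k : ℕ, (A (k + 1) + L * D (k + 1)) - (A k + L * D k)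
      = (lam k - L) * (D k - D (k + 1)) := by
    intro k
    have h := hlam k
    have hne : D k - D (k + 1) ≠ 0 := ne_of_gt (hd k)
    field_simp at h
    nlinarith [h]
  -- if L ≤ lam k then f k ≤ f (k+1)
  have up : ∀ k : ℕ, L ≤ lam k → A k + L * D k ≤ A (k + 1) + L * D (k + 1) := by
    intro k hk
    nlinarith [step k, hd k, mul_nonneg (sub_nonneg.mpr hk) (le_of_lt (hd k))]
  -- if lam k ≤ L (strict: lam k < L also works) then f (k+1) ≤ f k
  have down : ∀ k : ℕ, lam k ≤ L → A (k + 1) + L * D (k + 1) ≤ A k + L * D k := by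
    intro k hk
    nlinarith [step k, mul_nonpos_of_nonpos_of_nonneg (sub_nonpos.mpr hk) (le_of_lt (hd k))]
  -- increasing from index m onwards given L ≤ lam m
  have incr : ∀ m : ℕ, L ≤ lam m → ∀ k : ℕ, m ≤ k → A m + L * D m ≤ A k + L * D k := by
    intro m hm k hk
    induction k with
    | zero => simpa [Nat.le_zero.mp hk]
    | succ j ih =>
      rcases Nat.lt_or_ge m (j + 1) with h | h
      · have hmj : m ≤ j := Nat.lt_succ_iff.mp h
        exact (ih hmj).trans (up j (hm.trans (hmono.le_iff_le.mpr hmj)))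
      · have : m = j + 1 := le_antisymm hk h
        simp [this]
  constructor
  · intro n h1 h2 k
    rcases Nat.lt_or_ge k (n + 1) with h | h
    · -- k ≤ n : descend from k to n+1
      have hk : k ≤ n := Nat.lt_succ_iff.mp h
      clear h2
      induction n with
      | zero =>
        have : k = 0 := Nat.le_zero.mp hk
        subst this
        exact down 0 (le_of_lt h1)
      | succ j ih =>
        have hlj : lam j < L := lt_trans (hmono (Nat.lt_succ_self j)) h1
        rcases Nat.lt_or_ge j k with h' | h'
        · have : k = j + 1 := le_antisymm hk h'
          subst this
          exact down (j + 1) (le_of_lt h1)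
        · exact le_trans (down (j + 1) (le_of_lt h1)) (ih hlj (Nat.lt_succ_of_le h') h')
    · exact incr (n + 1) h2 k h
  · intro h0 k
    induction k with
    | zero => exact le_refl _
    | succ j ih =>
      exact ih.trans (up j (h0.trans (hmono.le_iff_le.mpr (Nat.zero_le j))))
end

section
/- Let ρ ∈ (0,1) and n ≥ 1 an integer. Every complex root λ of the polynomial p(λ) = λⁿ + ρ·Σ_{i=0}^{n-1} λⁱ satisfies |λ| < 1. -/
/-!
Multiplying the equation by `z - 1` turns it into `z ^ (n + 1) = (1 - ρ) z ^ n + ρ`. If `‖z‖ ≥ 1`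
and `z ^ n ≠ 1`, strict convexity of the norm makes the right-hand side, a proper convex combination
of `z ^ n` and `1`, strictly shorter than `z ^ n`, while the left-hand side is at least as long.
Hence `z ^ n = 1`, which forces `z = 1`; but `1` is not a root since `1 + ρ n > 0`.
-/

theorem pow_succ_eq_of_pow_add_mul_geom_sum_eq_zero {R : Type*} [CommRing R] {c z : R} {n : ℕ}
    (h : z ^ n + c * ∑ i ∈ Finset.range n, z ^ i = 0) :
    z ^ (n + 1) = (1 - c) * z ^ n + c := by
  linear_combination (z - 1) * h - c * geom_sum_mul z n

theorem eq_one_of_pow_succ_eq_combo {𝕜 : Type*} [NormedDivisionRing 𝕜] [NormedAlgebra ℝ 𝕜]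
    [StrictConvexSpace ℝ 𝕜] {ρ : ℝ} (hρ : 0 < ρ) (hρ1 : ρ < 1) {n : ℕ} {z : 𝕜}
    (hz : 1 ≤ ‖z‖) (h : z ^ (n + 1) = (1 - ρ) • z ^ n + ρ • (1 : 𝕜)) : z = 1 := by
  by_contra hz1
  have hzn : z ^ n ≠ 1 := fun hzn => hz1 <| by
    rwa [pow_succ, hzn, one_mul, ← add_smul, sub_add_cancel, one_smul] at h
  have hnorm : 1 ≤ ‖z ^ n‖ := by
    rw [norm_pow]
    exact one_le_pow₀ hz
  have hlt : ‖(1 - ρ) • z ^ n + ρ • (1 : 𝕜)‖ < ‖z ^ n‖ :=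
    norm_combo_lt_of_ne le_rfl (by rwa [norm_one]) hzn (by linarith) hρ (by ring)
  have hle : ‖z ^ n‖ ≤ ‖z ^ (n + 1)‖ := by
    rw [pow_succ, norm_mul]
    exact le_mul_of_one_le_right (norm_nonneg _) hz
  exact (h ▸ hle).not_gt hlt

theorem stmt_16_general (ρ : ℝ) (hρ : 0 < ρ) (hρ1 : ρ < 1) (n : ℕ) :
    ∀ z : ℂ, z ^ n + (ρ : ℂ) * ∑ i ∈ Finset.range n, z ^ i = 0 → ‖z‖ < 1 := by
  intro z hz
  by_contra! hz1
  have hstep := pow_succ_eq_of_pow_add_mul_geom_sum_eq_zero hz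
  have hone : z = 1 := eq_one_of_pow_succ_eq_combo hρ hρ1 hz1 <| by
    simpa only [Complex.real_smul, mul_one, Complex.ofReal_sub, Complex.ofReal_one] using hstep
  subst hone
  have hpos : (0 : ℝ) < 1 + ρ * n := by positivity
  refine hpos.ne' (Complex.ofReal_injective ?_)
  simpa using hz

theorem stmt_16 (ρ : ℝ) (hρ : 0 < ρ) (hρ1 : ρ < 1) (n : ℕ) (hn : 1 ≤ n) :
    ∀ z : ℂ, z ^ n + (ρ : ℂ) * ∑ i ∈ Finset.range n, z ^ i = 0 → ‖z‖ < 1 :=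
  stmt_16_general ρ hρ hρ1 n
end
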